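/- arXiv:1406.6662 — 6 statements merged into one kernel-verified Lean document; each statement's English description precedes it below -/
import Mathlib

section
/- For every field F there exist 6 pairwise distinct lines in ℙ²(F) having exactly 4 triple points and no point of multiplicity greater than 3. -/
/-- The projective plane over `F` (also used, by duality, for the lines of that plane). -/
abbrev ProjPlane (F : Type*) [Field F] := Projectivization F (Fin 3 → F)

/-- The point `P` lies on the line `L` (a line is recorded by the projective class of the
coefficient vector of a defining linear form): the pairing of representatives vanishes.
This does not depend on the choice of representatives. -/
def OnLine {F : Type*} [Field F] (P L : ProjPlane F) : Prop :=
  dotProduct P.rep L.rep = 0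

/-- The multiplicity of a point `P` with respect to a configuration `lines`:
the number of lines of the configuration passing through `P`. -/
noncomputable def mult {F : Type*} [Field F] (lines : Set (ProjPlane F))
    (P : ProjPlane F) : ℕ :=
  {L ∈ lines | OnLine P L}.ncard

/-!
Write a point as `(x₀ : x₁ : x₂)` and put `x₃ = 0`. The six lines `xᵢ = xⱼ` (`i < j` in `Fin 4`)
form the complete quadrangle on `(1:0:0), (0:1:0), (0:0:1), (1:1:1)`, and the multiplicity of a
point is the number of pairs of equal entries of `(x₀, x₁, x₂, 0)`. This vector is not constant,
so at most three pairs of its entries agree, and exactly three when all entries but one agree;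
the points with that property are the four vertices of the quadrangle.
-/

open Finset Projectivization

namespace SixLines

abbrev Pair := {p : Fin 4 × Fin 4 // p.1 < p.2}

section EqualPairs

variable {α : Type*}

def equalPairs [DecidableEq α] (q : Fin 4 → α) : Finset Pair :=
  {p | q p.1.1 = q p.1.2}

def ConstOff (q : Fin 4 → α) (k : Fin 4) : Prop :=
  ∀ i j, i ≠ k → j ≠ k → q i = q j

instance [DecidableEq α] (q : Fin 4 → α) (k : Fin 4) : Decidable (ConstOff q k) := by
  unfold ConstOff; infer_instance

theorem exists_selfMap_eq_iff {ι : Type*} [Nonempty ι] (q : ι → α) :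
    ∃ c : ι → ι, ∀ i j, c i = c j ↔ q i = q j := by
  have hq (i : ι) : q (Function.invFun q (q i)) = q i := Function.invFun_eq ⟨i, rfl⟩
  exact ⟨fun i => Function.invFun q (q i), fun i j =>
    ⟨fun h => (hq i).symm.trans ((congrArg q h).trans (hq j)), fun h => by simp only [h]⟩⟩

set_option maxRecDepth 2000 in
theorem card_equalPairs_of_fin_four (c : Fin 4 → Fin 4) (hc : ∃ i j, c i ≠ c j) :
    #(equalPairs c) ≤ 3 ∧ (#(equalPairs c) = 3 ↔ ∃ k, ConstOff c k) ∧
      ∀ k k', ConstOff c k → ConstOff c k' → k = k' := by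
  revert c; decide

theorem card_equalPairs [DecidableEq α] (q : Fin 4 → α) (hq : ∃ i j, q i ≠ q j) :
    #(equalPairs q) ≤ 3 ∧ (#(equalPairs q) = 3 ↔ ∃ k, ConstOff q k) ∧
      ∀ k k', ConstOff q k → ConstOff q k' → k = k' := by
  obtain ⟨c, hc⟩ := exists_selfMap_eq_iff q
  have hpairs : equalPairs c = equalPairs q := by simp only [equalPairs, hc]
  have hoff (k : Fin 4) : ConstOff c k ↔ ConstOff q k := by simp only [ConstOff, hc]
  simp only [← hpairs, ← hoff]
  exact card_equalPairs_of_fin_four c (by simpa only [ne_eq, hc] using hq)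

end EqualPairs

variable {F : Type*} [Field F]

theorem onLine_mk_mk {v w : Fin 3 → F} (hv : v ≠ 0) (hw : w ≠ 0) :
    OnLine (mk F v hv) (mk F w hw) ↔ v ⬝ᵥ w = 0 := by
  obtain ⟨a, ha⟩ := exists_smul_eq_mk_rep F v hv
  obtain ⟨b, hb⟩ := exists_smul_eq_mk_rep F w hw
  simp [OnLine, ← ha, ← hb, Units.smul_def, a.ne_zero, b.ne_zero]

def padZero (x : Fin 3 → F) : Fin 4 → F := ![x 0, x 1, x 2, 0]

theorem padZero_smul (a : F) (x : Fin 3 → F) : padZero (a • x) = a • padZero x := by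
  ext i; fin_cases i <;> simp [padZero]

theorem exists_padZero_ne {x : Fin 3 → F} (hx : x ≠ 0) : ∃ i j, padZero x i ≠ padZero x j := by
  by_contra! h
  exact hx (funext fun i => by fin_cases i; exacts [h 0 3, h 1 3, h 2 3])

def coordForm : Fin 4 → Fin 3 → F := ![![1, 0, 0], ![0, 1, 0], ![0, 0, 1], 0]

theorem dotProduct_coordForm (x : Fin 3 → F) (i : Fin 4) : x ⬝ᵥ coordForm i = padZero x i := by
  fin_cases i <;> simp [coordForm, padZero, dotProduct, Fin.sum_univ_three]

def vertex : Fin 4 → Fin 3 → F := ![![1, 0, 0], ![0, 1, 0], ![0, 0, 1], ![1, 1, 1]]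

theorem padZero_vertex_eq_iff (k i j : Fin 4) :
    padZero (vertex (F := F) k) i = padZero (vertex k) j ↔ (i = k ↔ j = k) := by
  fin_cases k <;> fin_cases i <;> fin_cases j <;> simp [vertex, padZero]

theorem vertex_ne_zero (k : Fin 4) : vertex (F := F) k ≠ 0 := by
  fin_cases k <;> simp [vertex]

noncomputable def vertexPt (k : Fin 4) : ProjPlane F := mk F (vertex k) (vertex_ne_zero k)

theorem mk_eq_vertexPt_iff {v : Fin 3 → F} (hv : v ≠ 0) (k : Fin 4) :
    mk F v hv = vertexPt k ↔ ConstOff (padZero v) k := by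
  rw [vertexPt, mk_eq_mk_iff']
  constructor
  · rintro ⟨a, rfl⟩ i j hi hj
    simp [padZero_smul, padZero_vertex_eq_iff, hi, hj]
  · intro h
    have hoff (i j : Fin 4) (hi : i ≠ k := by decide) (hj : j ≠ k := by decide) :
        padZero v i = padZero v j := h i j hi hj
    fin_cases k
    · have h1 := hoff 1 3; have h2 := hoff 2 3
      exact ⟨v 0, by ext i; fin_cases i <;> simp_all [vertex, padZero]⟩
    · have h0 := hoff 0 3; have h2 := hoff 2 3
      exact ⟨v 1, by ext i; fin_cases i <;> simp_all [vertex, padZero]⟩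
    · have h0 := hoff 0 3; have h1 := hoff 1 3
      exact ⟨v 2, by ext i; fin_cases i <;> simp_all [vertex, padZero]⟩
    · have h1 := hoff 0 1; have h2 := hoff 0 2
      exact ⟨v 0, by ext i; fin_cases i <;> simp_all [vertex, padZero]⟩

def braidForm (p : Pair) : Fin 3 → F := coordForm (F := F) p.1.1 - coordForm p.1.2

theorem dotProduct_braidForm (x : Fin 3 → F) (p : Pair) :
    x ⬝ᵥ braidForm p = padZero x p.1.1 - padZero x p.1.2 := by
  rw [braidForm, dotProduct_sub, dotProduct_coordForm, dotProduct_coordForm]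

theorem braidForm_ne_zero (p : Pair) : braidForm (F := F) p ≠ 0 := by
  intro h
  have := dotProduct_braidForm (vertex (F := F) p.1.1) p
  rw [h, dotProduct_zero, eq_comm, sub_eq_zero, padZero_vertex_eq_iff] at this
  exact p.2.ne' (this.1 rfl)

noncomputable def braidLine (p : Pair) : ProjPlane F := mk F (braidForm p) (braidForm_ne_zero p)

theorem onLine_braidLine_iff {v : Fin 3 → F} (hv : v ≠ 0) (p : Pair) :
    OnLine (mk F v hv) (braidLine p) ↔ padZero v p.1.1 = padZero v p.1.2 := by
  rw [braidLine, onLine_mk_mk, dotProduct_braidForm, sub_eq_zero]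

theorem Pair.eq_of_forall_iff (p p' : Pair)
    (h : ∀ k, ((p.1.1 = k ↔ p.1.2 = k) ↔ (p'.1.1 = k ↔ p'.1.2 = k))) : p = p' := by
  revert h; revert p p'; decide

theorem braidLine_injective : Function.Injective (braidLine (F := F)) := by
  intro p p' h
  refine Pair.eq_of_forall_iff p p' fun k => ?_
  have hk (q : Pair) :=
    (onLine_braidLine_iff (vertex_ne_zero (F := F) k) q).trans (padZero_vertex_eq_iff k _ _)
  rw [← hk, ← hk, h]

theorem mult_braidLines_mk [DecidableEq F] {v : Fin 3 → F} (hv : v ≠ 0) :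
    mult (Set.range braidLine) (mk F v hv) = #(equalPairs (padZero v)) := by
  have : {L ∈ Set.range braidLine | OnLine (mk F v hv) L} =
      braidLine '' ↑(equalPairs (padZero v)) := by
    ext L
    simp only [Set.mem_ofPred_eq, Set.mem_image, Set.mem_range, coe_filter, equalPairs,
      mem_univ, true_and]
    constructor
    · rintro ⟨⟨p, rfl⟩, hp⟩
      exact ⟨p, (onLine_braidLine_iff hv p).1 hp, rfl⟩
    · rintro ⟨p, hp, rfl⟩
      exact ⟨⟨p, rfl⟩, (onLine_braidLine_iff hv p).2 hp⟩
  rw [mult, this, Set.ncard_image_of_injective _ braidLine_injective, Set.ncard_coe_finset]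

theorem vertexPt_injective : Function.Injective (vertexPt (F := F)) := by
  classical
  intro k k' h
  have hv := vertex_ne_zero (F := F) k
  have hk := (mk_eq_vertexPt_iff hv k).1 rfl
  have hk' := (mk_eq_vertexPt_iff hv k').1 h
  exact (card_equalPairs _ (exists_padZero_ne hv)).2.2 k k' hk hk'

end SixLines

open SixLines

/-- Over every field there is a configuration of `6` pairwise distinct lines in `ℙ²(F)` with
exactly `4` triple points and no point of multiplicity greater than `3`. -/
theorem six_lines_four_triple_points (F : Type*) [Field F] :
    ∃ lines : Set (ProjPlane F),
      lines.ncard = 6 ∧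
      {P : ProjPlane F | mult lines P = 3}.ncard = 4 ∧
      ∀ P : ProjPlane F, mult lines P ≤ 3 := by
  classical
  have hmult (P : ProjPlane F) :
      mult (Set.range braidLine) P = #(equalPairs (padZero P.rep)) := by
    conv_lhs => rw [← P.mk_rep]
    exact mult_braidLines_mk _
  have hcard (P : ProjPlane F) := card_equalPairs _ (exists_padZero_ne P.rep_nonzero)
  have htriple : {P | mult (Set.range braidLine) P = 3} = Set.range (vertexPt (F := F)) := by
    ext P
    rw [Set.mem_ofPred_eq, hmult, (hcard P).2.1, Set.mem_range]
    exact exists_congr fun k => by rw [eq_comm, ← mk_eq_vertexPt_iff P.rep_nonzero, mk_rep]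
  refine ⟨Set.range braidLine, ?_, ?_, fun P => hmult P ▸ (hcard P).1⟩
  · rw [Set.ncard_range_of_injective braidLine_injective, Nat.card_eq_fintype_card]; rfl
  · rw [htriple, Set.ncard_range_of_injective vertexPt_injective, Nat.card_eq_fintype_card,
      Fintype.card_fin]
end

section
/- For every field F of characteristic 2 there exist 7 pairwise distinct lines in ℙ²(F) having exactly 7 triple points and no other intersection points (every point lying on at least two of the lines lies on exactly three of them); for F = 𝔽₂ this is the Fano plane configuration. -/
open Matrix Projectivization

theorem RingHom.map_crossProduct {R S : Type*} [CommRing R] [CommRing S] (f : R →+* S)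
    (v w : Fin 3 → R) : f ∘ (v ⨯₃ w) = (f ∘ v) ⨯₃ (f ∘ w) := by
  ext i
  fin_cases i <;> simp [cross_apply]

theorem RingHom.comp_eq_zero_iff {R S ι : Type*} [DivisionRing R] [Semiring S] [Nontrivial S]
    (f : R →+* S) {v : ι → R} : f ∘ v = 0 ↔ v = 0 := by
  simp only [funext_iff, Function.comp_apply, Pi.zero_apply, map_eq_zero_iff f f.injective]

theorem Projectivization.mk_eq_mk_crossProduct_of_dotProduct_eq_zero {F : Type*} [Field F]
    {x a b : Fin 3 → F} (hx : x ≠ 0) (hab : a ⨯₃ b ≠ 0) (ha : x ⬝ᵥ a = 0) (hb : x ⬝ᵥ b = 0) :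
    mk F x hx = mk F (a ⨯₃ b) hab := by
  rw [mk_eq_mk_iff_crossProduct_eq_zero, cross_cross_eq_smul_sub_smul', dotProduct_comm a, ha, hb,
    zero_smul, zero_smul, sub_zero]

theorem onLine_iff_orthogonal {F : Type*} [Field F] (P L : ProjPlane F) :
    OnLine P L ↔ P.orthogonal L := by
  conv_rhs => rw [← mk_rep P, ← mk_rep L]
  rfl

namespace Fano

theorem crossProduct_eq_zero_iff :
    ∀ v w : Fin 3 → ZMod 2, v ≠ 0 → w ≠ 0 → (v ⨯₃ w = 0 ↔ v = w) := by
  decide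

theorem card_orthogonal : ∀ v : {v : Fin 3 → ZMod 2 // v ≠ 0},
    (Finset.univ.filter fun w : {v : Fin 3 → ZMod 2 // v ≠ 0} => v.1 ⬝ᵥ w.1 = 0).card = 3 := by
  decide

variable {F : Type*} [Field F] (φ : ZMod 2 →+* F)

/-- A nonzero vector of `𝔽₂³` is the only representative of its point of `ℙ²(𝔽₂)`, so nonzero
vectors stand for the points (and lines) of the Fano plane. -/
noncomputable def line (v : {v : Fin 3 → ZMod 2 // v ≠ 0}) : ProjPlane F :=
  mk F (φ ∘ v.1) (φ.comp_eq_zero_iff.not.2 v.2)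

theorem line_injective : Function.Injective (line φ) := by
  intro v w h
  rw [line, line, mk_eq_mk_iff_crossProduct_eq_zero, ← φ.map_crossProduct,
    φ.comp_eq_zero_iff, crossProduct_eq_zero_iff _ _ v.2 w.2] at h
  exact Subtype.ext h

theorem onLine_line_iff (v w : {v : Fin 3 → ZMod 2 // v ≠ 0}) :
    OnLine (line φ v) (line φ w) ↔ v.1 ⬝ᵥ w.1 = 0 := by
  rw [onLine_iff_orthogonal, line, line, orthogonal_mk, ← φ.map_dotProduct,
    map_eq_zero_iff φ φ.injective]

theorem mult_line (v : {v : Fin 3 → ZMod 2 // v ≠ 0}) :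
    mult (Set.range (line φ)) (line φ v) = 3 := by
  have : {L ∈ Set.range (line φ) | OnLine (line φ v) L} = line φ '' {w | v.1 ⬝ᵥ w.1 = 0} := by
    ext L
    simp only [Set.mem_ofPred_eq, Set.mem_image, Set.mem_range]
    constructor
    · rintro ⟨⟨w, rfl⟩, hw⟩
      exact ⟨w, (onLine_line_iff φ v w).1 hw, rfl⟩
    · rintro ⟨w, hw, rfl⟩
      exact ⟨⟨w, rfl⟩, (onLine_line_iff φ v w).2 hw⟩
  rw [mult, this, Set.ncard_image_of_injective _ (line_injective φ), Set.ncard_eq_toFinset_card',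
    Set.toFinset_ofPred, card_orthogonal]

theorem mem_range_line_of_two_le_mult {P : ProjPlane F} (h : 2 ≤ mult (Set.range (line φ)) P) :
    P ∈ Set.range (line φ) := by
  obtain ⟨_, _, ⟨⟨v, rfl⟩, hv⟩, ⟨⟨w, rfl⟩, hw⟩, hvw⟩ :=
    (Set.one_lt_ncard_iff ((Set.finite_range _).subset (Set.sep_subset _ _))).1 h
  have hcross : v.1 ⨯₃ w.1 ≠ 0 := fun h0 ↦
    hvw (congrArg _ (Subtype.ext ((crossProduct_eq_zero_iff _ _ v.2 w.2).1 h0)))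
  induction P using Projectivization.ind with | h x hx => ?_
  rw [onLine_iff_orthogonal, line, orthogonal_mk] at hv hw
  refine ⟨⟨_, hcross⟩, ?_⟩
  rw [mk_eq_mk_crossProduct_of_dotProduct_eq_zero hx
    (by rwa [← φ.map_crossProduct, Ne, φ.comp_eq_zero_iff]) hv hw, line]
  congr 1
  exact φ.map_crossProduct _ _

theorem mult_eq_three_of_two_le_mult {P : ProjPlane F} (h : 2 ≤ mult (Set.range (line φ)) P) :
    mult (Set.range (line φ)) P = 3 := by
  obtain ⟨v, rfl⟩ := mem_range_line_of_two_le_mult φ h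
  exact mult_line φ v

theorem setOf_mult_eq_three : {P | mult (Set.range (line φ)) P = 3} = Set.range (line φ) := by
  ext P
  refine ⟨fun hP ↦ mem_range_line_of_two_le_mult φ (hP.ge.trans' (by norm_num)), ?_⟩
  rintro ⟨v, rfl⟩
  exact mult_line φ v

theorem ncard_range_line : (Set.range (line φ)).ncard = 7 := by
  rw [Set.ncard_range_of_injective (line_injective φ), Nat.card_eq_fintype_card]
  decide

end Fano

/-- Over every field of characteristic `2` there is a configuration of `7` pairwise distinct
lines in `ℙ²(F)` with exactly `7` triple points and no other intersection points: every point
lying on at least two of the lines lies on exactly three of them (the Fano configuration). -/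
theorem seven_lines_seven_triple_points (F : Type*) [Field F] [CharP F 2] :
    ∃ lines : Set (ProjPlane F),
      lines.ncard = 7 ∧
      {P : ProjPlane F | mult lines P = 3}.ncard = 7 ∧
      ∀ P : ProjPlane F, 2 ≤ mult lines P → mult lines P = 3 := by
  let φ : ZMod 2 →+* F := ZMod.castHom dvd_rfl F
  refine ⟨Set.range (Fano.line φ), Fano.ncard_range_line φ, ?_,
    fun _ ↦ Fano.mult_eq_three_of_two_le_mult φ⟩
  rw [Fano.setOf_mult_eq_three, Fano.ncard_range_line]
end

section
/- Let F be a field containing a nontrivial third root of unity, i.e., an element ω ≠ 1 with ω³ = 1. Then there exist 9 pairwise distinct lines in ℙ²(F) having exactly 12 triple points and no other intersection points (every point lying on at least two of the lines lies on exactly three of them); this is the dual Hesse configuration. -/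
/-!
The nine lines are `x_{t+1} = r x_{t+2}` for `t ∈ Fin 3` and `r³ = 1`; by `ω` there are exactly
three such `r`. A point on two lines of the same family `t` is the vertex `e_t`, which lies on
the three lines of that family. A point on lines of two different families satisfies
`p_{t+1}³ = p_{t+2}³` for two different edges `{t+1, t+2}` of the index triangle, so all
`p_k³` agree and the point is `[1 : r : s]` with `r³ = s³ = 1`; such a point lies on exactly one
line of each family. So the points of multiplicity at least two are the `3 + 9` points `e_t`
and `[1 : r : s]`, all triple.
-/

open Projectivization

section

variable {F : Type*} [Field F]

theorem onLine_mk_iff {v u : Fin 3 → F} (hv : v ≠ 0) (hu : u ≠ 0) :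
    OnLine (mk F v hv) (mk F u hu) ↔ v ⬝ᵥ u = 0 := by
  obtain ⟨a, ha⟩ := exists_smul_eq_mk_rep F v hv
  obtain ⟨b, hb⟩ := exists_smul_eq_mk_rep F u hu
  rw [OnLine, ← ha, ← hb, Units.smul_def, Units.smul_def, smul_dotProduct, dotProduct_smul,
    smul_eq_mul, smul_eq_mul, mul_eq_zero, mul_eq_zero]
  simp [Units.ne_zero]

theorem mult_range {ι : Type*} {f : ι → ProjPlane F} (hf : f.Injective) (P : ProjPlane F) :
    mult (Set.range f) P = {i | OnLine P (f i)}.ncard := by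
  rw [mult, ← Set.ncard_preimage_of_injective_subset_range hf fun L hL => hL.1]
  simp [Set.preimage]

theorem ne_zero_of_pow_three_eq_one {x : F} (h : x ^ 3 = 1) : x ≠ 0 :=
  ne_zero_pow three_ne_zero (h ▸ one_ne_zero)

theorem fin_three_eq_or_eq_add_one_or_eq_add_two (t k : Fin 3) :
    k = t ∨ k = t + 1 ∨ k = t + 2 := by
  fin_cases t <;> fin_cases k <;> decide

theorem apply_eq_apply_zero_of_two_edges {α : Type*} {c : Fin 3 → α} {t t' : Fin 3}
    (htt : t ≠ t') (ht : c (t + 1) = c (t + 2)) (ht' : c (t' + 1) = c (t' + 2)) (k : Fin 3) :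
    c k = c 0 := by
  fin_cases t <;> fin_cases t' <;> fin_cases k <;> simp_all

namespace DualHesse

abbrev CubeRoot (F : Type*) [Field F] := {r : F // r ^ 3 = 1}

theorem card_cubeRoot {ω : F} (hω : ω ≠ 1) (hω3 : ω ^ 3 = 1) :
    Nat.card (CubeRoot F) = 3 := by
  have hprim : IsPrimitiveRoot ω 3 := orderOf_eq_prime hω3 hω ▸ IsPrimitiveRoot.orderOf ω
  calc Nat.card {r : F // r ^ 3 = 1}
      = Nat.card (Polynomial.nthRootsFinset 3 (1 : F)) :=
        Nat.card_congr (Equiv.subtypeEquivRight fun r => by simp)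
    _ = 3 := by rw [Nat.card_eq_finsetCard, hprim.card_nthRootsFinset]

theorem CubeRoot.ne_zero (r : CubeRoot F) : (r : F) ≠ 0 :=
  ne_zero_of_pow_three_eq_one r.2

def lineVec (t : Fin 3) (r : F) : Fin 3 → F := Pi.single (t + 1) 1 - r • Pi.single (t + 2) 1

theorem dotProduct_lineVec (p : Fin 3 → F) (t : Fin 3) (r : F) :
    p ⬝ᵥ lineVec t r = p (t + 1) - r * p (t + 2) := by
  simp [lineVec, dotProduct_sub, dotProduct_smul, dotProduct_single, mul_comm]

theorem lineVec_apply_self (t : Fin 3) (r : F) : lineVec t r t = 0 := by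
  fin_cases t <;> simp [lineVec]

theorem lineVec_apply_add_one (t : Fin 3) (r : F) : lineVec t r (t + 1) = 1 := by
  fin_cases t <;> simp [lineVec]

theorem lineVec_apply_add_two (t : Fin 3) (r : F) : lineVec t r (t + 2) = -r := by
  fin_cases t <;> simp [lineVec]

theorem lineVec_ne_zero (t : Fin 3) (r : F) : lineVec t r ≠ 0 := fun h =>
  one_ne_zero (α := F) (by simpa [h] using lineVec_apply_add_one t r)

noncomputable def line (x : Fin 3 × CubeRoot F) : ProjPlane F :=
  mk F (lineVec x.1 x.2) (lineVec_ne_zero _ _)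

theorem onLine_line_iff {p : Fin 3 → F} (hp : p ≠ 0) (x : Fin 3 × CubeRoot F) :
    OnLine (mk F p hp) (line x) ↔ p (x.1 + 1) = x.2 * p (x.1 + 2) := by
  rw [line, onLine_mk_iff, dotProduct_lineVec, sub_eq_zero]

theorem line_injective : (line (F := F)).Injective := by
  rintro ⟨t, r⟩ ⟨t', r'⟩ h
  obtain ⟨a, ha⟩ := (mk_eq_mk_iff' F _ _ _ _).1 h
  have ha0 : a ≠ 0 := by
    rintro rfl
    rw [zero_smul] at ha
    exact lineVec_ne_zero _ _ ha.symm
  have ht : t' = t := by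
    have h0 := congrFun ha t
    rw [Pi.smul_apply, smul_eq_mul, lineVec_apply_self, mul_eq_zero, or_iff_right ha0] at h0
    rcases fin_three_eq_or_eq_add_one_or_eq_add_two t' t with h | rfl | rfl
    · exact h.symm
    · simp [lineVec_apply_add_one] at h0
    · simp [lineVec_apply_add_two, r'.ne_zero] at h0
  subst ht
  have h1 := congrFun ha (t' + 1)
  have h2 := congrFun ha (t' + 2)
  simp only [Pi.smul_apply, smul_eq_mul, lineVec_apply_add_one, lineVec_apply_add_two,
    mul_one] at h1 h2
  simp_all [Subtype.ext_iff]

def pointVec : Fin 3 ⊕ CubeRoot F × CubeRoot F → Fin 3 → F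
  | .inl t => Pi.single t 1
  | .inr (r, s) => ![1, r, s]

theorem pointVec_inr_apply_pow_three (r s : CubeRoot F) (k : Fin 3) :
    pointVec (.inr (r, s)) k ^ 3 = 1 := by
  fin_cases k
  exacts [one_pow 3, r.2, s.2]

theorem pointVec_ne_zero (s : Fin 3 ⊕ CubeRoot F × CubeRoot F) : pointVec s ≠ 0 := by
  rcases s with t | ⟨r, s⟩
  · simp [pointVec]
  · exact fun h => one_ne_zero (α := F) (congrFun h 0)

noncomputable def point (s : Fin 3 ⊕ CubeRoot F × CubeRoot F) : ProjPlane F :=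
  mk F (pointVec s) (pointVec_ne_zero s)

theorem point_injective : (point (F := F)).Injective := by
  intro s s' h
  obtain ⟨a, ha⟩ := (mk_eq_mk_iff' F _ _ _ _).1 h
  have hne (r s : CubeRoot F) (k : Fin 3) : pointVec (.inr (r, s)) k ≠ 0 :=
    ne_zero_of_pow_three_eq_one (pointVec_inr_apply_pow_three r s k)
  rcases s with t | ⟨r, s⟩ <;> rcases s' with t' | ⟨r', s'⟩
  · have ht := congrFun ha t
    by_contra htt
    simp_all [pointVec, Pi.single_apply, eq_comm]
  · have h1 := congrFun ha (t + 1)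
    have h0 := congrFun ha t
    rw [Pi.smul_apply, smul_eq_mul, pointVec, Pi.single_eq_of_ne (by simp)] at h1
    rw [(mul_eq_zero.1 h1).resolve_right (hne _ _ _)] at h0
    simp [pointVec] at h0
  · have h1 := congrFun ha (t' + 1)
    rw [Pi.smul_apply, smul_eq_mul, pointVec, Pi.single_eq_of_ne (by simp), mul_zero] at h1
    exact absurd h1.symm (hne _ _ _)
  · have h0 := congrFun ha 0
    have h1 := congrFun ha 1
    have h2 := congrFun ha 2
    simp_all [pointVec, Subtype.ext_iff]

theorem mult_point_inl (t : Fin 3) :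
    mult (Set.range line) (point (F := F) (.inl t)) = Nat.card (CubeRoot F) := by
  have hinc :
      {x | OnLine (point (.inl t)) (line x)} = Set.range (Prod.mk t (β := CubeRoot F)) := by
    ext ⟨t', r⟩
    rw [point, Set.mem_ofPred_eq, onLine_line_iff]
    fin_cases t <;> fin_cases t' <;> simp [pointVec, r.ne_zero.symm]
  rw [mult_range line_injective, hinc, Set.ncard_range_of_injective (Prod.mk_right_injective t)]

theorem mult_mk_of_pow_three_eq_one {p : Fin 3 → F} (hp : p ≠ 0) (hcube : ∀ k, p k ^ 3 = 1) :
    mult (Set.range line) (mk F p hp) = 3 := by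
  have hne k := ne_zero_of_pow_three_eq_one (hcube k)
  let ratio (t : Fin 3) : CubeRoot F :=
    ⟨p (t + 1) / p (t + 2), by rw [div_pow, hcube, hcube, div_one]⟩
  have hinc : {x | OnLine (mk F p hp) (line x)} = Set.range fun t => (t, ratio t) := by
    ext ⟨t, r⟩
    simp only [Set.mem_ofPred_eq, onLine_line_iff, Set.mem_range, Prod.mk.injEq, exists_eq_left,
      Subtype.ext_iff, ratio, div_eq_iff (hne _)]
  rw [mult_range line_injective, hinc,
    Set.ncard_range_of_injective fun t t' h => congrArg Prod.fst h, Nat.card_eq_fintype_card,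
    Fintype.card_fin]

theorem exists_point_eq_mk_of_onLine {p : Fin 3 → F} (hp : p ≠ 0) {x y : Fin 3 × CubeRoot F}
    (hxy : x ≠ y) (hx : OnLine (mk F p hp) (line x)) (hy : OnLine (mk F p hp) (line y)) :
    ∃ s, point s = mk F p hp := by
  obtain ⟨t, r⟩ := x
  obtain ⟨t', r'⟩ := y
  rw [onLine_line_iff] at hx hy
  by_cases htt : t = t'
  · subst htt
    have hr : (r : F) ≠ r' := fun h => hxy (by rw [Subtype.ext h])
    have h2 : p (t + 2) = 0 := by
      have : (r - r' : F) * p (t + 2) = 0 := by linear_combination hy - hx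
      exact (mul_eq_zero.1 this).resolve_left (sub_ne_zero.2 hr)
    have h1 : p (t + 1) = 0 := by rw [hx, h2, mul_zero]
    refine ⟨.inl t, ((mk_eq_mk_iff' F _ _ _ _).2 ⟨p t, ?_⟩).symm⟩
    funext k
    rcases fin_three_eq_or_eq_add_one_or_eq_add_two t k with rfl | rfl | rfl <;>
      simp [pointVec, h1, h2]
  · have hcube (q : CubeRoot F) {a b : F} (h : a = q * b) : a ^ 3 = b ^ 3 := by
      rw [h, mul_pow, q.2, one_mul]
    have hall := apply_eq_apply_zero_of_two_edges (c := fun k => p k ^ 3) htt (hcube r hx)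
      (hcube r' hy)
    have h0 : p 0 ≠ 0 := fun h0 =>
      hp (funext fun k => pow_eq_zero_iff three_ne_zero |>.1 (by simp [hall k, h0]))
    have hroot (k : Fin 3) : (p k / p 0) ^ 3 = 1 := by
      rw [div_pow, hall k, div_self (pow_ne_zero 3 h0)]
    refine ⟨.inr (⟨_, hroot 1⟩, ⟨_, hroot 2⟩),
      ((mk_eq_mk_iff' F _ _ _ _).2 ⟨p 0, ?_⟩).symm⟩
    funext k
    fin_cases k <;> simp [pointVec, mul_div_cancel₀ _ h0]

theorem exists_point_eq_of_two_le_mult {P : ProjPlane F} (h : 2 ≤ mult (Set.range line) P) :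
    ∃ s, point s = P := by
  rw [mult_range line_injective] at h
  obtain ⟨x, hx⟩ :=
    Set.nonempty_of_ncard_ne_zero (s := {x | OnLine P (line x)}) (by omega)
  obtain ⟨y, hy, hyx⟩ := Set.exists_ne_of_one_lt_ncard h x
  rw [← mk_rep P] at hx hy ⊢
  exact exists_point_eq_mk_of_onLine _ hyx.symm hx hy

theorem mult_point (hR : Nat.card (CubeRoot F) = 3) (s : Fin 3 ⊕ CubeRoot F × CubeRoot F) :
    mult (Set.range line) (point s) = 3 := by
  rcases s with t | ⟨r, s⟩
  · rw [mult_point_inl, hR]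
  · exact mult_mk_of_pow_three_eq_one _ (pointVec_inr_apply_pow_three r s)

theorem setOf_mult_eq_three (hR : Nat.card (CubeRoot F) = 3) :
    {P | mult (Set.range line) P = 3} = Set.range (point (F := F)) := by
  ext P
  refine ⟨fun h => exists_point_eq_of_two_le_mult (by rw [Set.mem_ofPred_eq.mp h]; omega), ?_⟩
  rintro ⟨s, rfl⟩
  exact mult_point hR s

end DualHesse

end

/-- Over every field containing a nontrivial third root of unity there is a configuration of
`9` pairwise distinct lines in `ℙ²(F)` with exactly `12` triple points and no other
intersection points: every point lying on at least two of the lines lies on exactly three of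
them (the dual Hesse configuration). -/
theorem nine_lines_twelve_triple_points (F : Type*) [Field F]
    (ω : F) (hω : ω ≠ 1) (hω3 : ω ^ 3 = 1) :
    ∃ lines : Set (ProjPlane F),
      lines.ncard = 9 ∧
      {P : ProjPlane F | mult lines P = 3}.ncard = 12 ∧
      ∀ P : ProjPlane F, 2 ≤ mult lines P → mult lines P = 3 := by
  have hR := DualHesse.card_cubeRoot hω hω3
  have : Finite (DualHesse.CubeRoot F) := Nat.finite_of_card_ne_zero (by omega)
  refine ⟨Set.range DualHesse.line, ?_, ?_, fun P hP => ?_⟩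
  · rw [Set.ncard_range_of_injective DualHesse.line_injective, Nat.card_prod, hR]
    simp
  · rw [DualHesse.setOf_mult_eq_three hR,
      Set.ncard_range_of_injective DualHesse.point_injective, Nat.card_sum, Nat.card_prod, hR]
    simp
  · obtain ⟨s, rfl⟩ := DualHesse.exists_point_eq_of_two_le_mult hP
    exact DualHesse.mult_point hR s
end

section
/- For every prime number p ≥ 5 there exist p² pairwise distinct lines in ℙ²(ℂ) having exactly (p²−1)(p²−2)/6 triple points, exactly p²−1 double points, and no point of multiplicity greater than 3. -/
/-!
Take the lines `ℓ_t : t x + t² y + (t³ - 1) z = 0` for `t` in the group `μ_n` of `n`-th roots of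
unity, `n = p²`. A point `[u]` lies on `ℓ_t` iff `t` is a root of `u₂ t³ + u₁ t² + u₀ t - u₂`, a
cubic whose roots multiply to `1`. So two lines `ℓ_a`, `ℓ_b` meet in the point whose cubic is
`(t - a)(t - b)(t - (ab)⁻¹)`, which lies on exactly the lines indexed by `{a, b, (ab)⁻¹} ⊆ μ_n`.
Triple points therefore correspond to the 3-subsets of `μ_n` with product `1`, and double points to
the pairs `{g, g⁻²}` with `g³ ≠ 1`. As `3 ∤ n`, cubing is a bijection of `μ_n`: this gives `n - 1`
double points, and multiplying by cube roots shows that the product is equidistributed over the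
`C(n, 3)` 3-subsets, giving `C(n, 3) / n = (n - 1)(n - 2) / 6` triple points.
-/

open Finset

lemma card_powersetCard_three_filter_prod_eq_one {G : Type*} [CommGroup G] [Fintype G]
    [DecidableEq G] (h : (Nat.card G).Coprime 3) :
    #{S ∈ powersetCard 3 (univ : Finset G) | ∏ g ∈ S, g = 1} =
      (Nat.card G - 1) * (Nat.card G - 2) / 6 := by
  have hfiber (s : G) : #{S ∈ powersetCard 3 (univ : Finset G) | ∏ g ∈ S, g = s} =
      #{S ∈ powersetCard 3 (univ : Finset G) | ∏ g ∈ S, g = 1} := by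
    obtain ⟨t, rfl⟩ := (powCoprime h).surjective s
    refine card_equiv (Equiv.mulLeft t⁻¹).finsetCongr fun S ↦ ?_
    simp only [mem_filter, mem_powersetCard, subset_univ, true_and, Equiv.finsetCongr_apply,
      card_map, prod_map, Equiv.coe_toEmbedding, Equiv.coe_mulLeft, powCoprime_apply]
    exact and_congr_right fun hS ↦ by
      rw [prod_mul_distrib, prod_const, hS, inv_pow, inv_mul_eq_one, eq_comm]
  have hchoose : (Nat.card G).choose 3 =
      Nat.card G * #{S ∈ powersetCard 3 (univ : Finset G) | ∏ g ∈ S, g = 1} := by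
    rw [Nat.card_eq_fintype_card, ← card_univ, ← card_powersetCard,
      card_eq_sum_card_fiberwise (f := fun S ↦ ∏ g ∈ S, g) (t := univ) fun _ _ ↦ mem_univ _]
    simp [hfiber]
  have h6 : 6 * (Nat.card G).choose 3 = Nat.card G * ((Nat.card G - 1) * (Nat.card G - 2)) := by
    rw [show 6 = Nat.factorial 3 from rfl, ← Nat.descFactorial_eq_factorial_mul_choose]
    simp only [Nat.descFactorial, tsub_zero, mul_one]
    ring
  refine (Nat.div_eq_of_eq_mul_left (by norm_num) ?_).symm
  refine Nat.eq_of_mul_eq_mul_left (Nat.card_pos (α := G)) ?_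
  rw [← h6, hchoose]
  ring

lemma self_eq_inv_mul_self_iff {G : Type*} [Group G] {g : G} : g = (g * g)⁻¹ ↔ g ^ 3 = 1 := by
  rw [eq_inv_iff_mul_eq_one, pow_three]

lemma pow_three_eq_one_iff_of_coprime {G : Type*} [Group G] (h : (Nat.card G).Coprime 3) {g : G} :
    g ^ 3 = 1 ↔ g = 1 := by
  rw [← powCoprime_apply h, (powCoprime h).injective.eq_iff' (by rw [powCoprime_apply, one_pow])]

namespace CubicLines

open Projectivization

variable {K : Type*} [Field K]

def lineVec (t : K) : Fin 3 → K := ![t, t ^ 2, t ^ 3 - 1]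

def pointVec (x y z : K) : Fin 3 → K := ![x * y + x * z + y * z, -(x + y + z), 1]

lemma lineVec_ne_zero (t : K) : lineVec t ≠ 0 := by
  intro h
  by_cases ht : t = 0
  · simpa [lineVec, ht] using congrFun h 2
  · simpa [lineVec, ht] using congrFun h 0

lemma pointVec_ne_zero (x y z : K) : pointVec x y z ≠ 0 := by
  intro h
  simpa [pointVec] using congrFun h 2

lemma dotProduct_lineVec (u : Fin 3 → K) (t : K) :
    u ⬝ᵥ lineVec t = u 2 * t ^ 3 + u 1 * t ^ 2 + u 0 * t - u 2 := by
  simp only [dotProduct, lineVec, Fin.sum_univ_three, Fin.isValue, Matrix.cons_val_zero,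
    Matrix.cons_val_one, Matrix.cons_val]
  ring

lemma pointVec_dotProduct_lineVec {x y z : K} (h : x * y * z = 1) (t : K) :
    pointVec x y z ⬝ᵥ lineVec t = (t - x) * (t - y) * (t - z) := by
  rw [dotProduct_lineVec]
  simp only [pointVec, Matrix.cons_val_zero, Matrix.cons_val_one, Matrix.cons_val_two,
    Matrix.head_cons, Matrix.tail_cons]
  linear_combination h

lemma eq_smul_pointVec {u : Fin 3 → K} {x y z : K} (hx0 : x ≠ 0) (hy0 : y ≠ 0)
    (hxy : x ≠ y) (hxyz : x * y * z = 1) (hx : u ⬝ᵥ lineVec x = 0) (hy : u ⬝ᵥ lineVec y = 0) :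
    u = u 2 • pointVec x y z := by
  rw [dotProduct_lineVec] at hx hy
  -- `(u - u 2 • pointVec x y z) ⬝ᵥ lineVec t = t * (B * t + A)` vanishes at `x` and `y`.
  set A := u 0 - u 2 * (x * y + x * z + y * z)
  set B := u 1 + u 2 * (x + y + z)
  have hBx : B * x + A = 0 := (mul_eq_zero.mp
    (by linear_combination hx - u 2 * hxyz : x * (B * x + A) = 0)).resolve_left hx0
  have hBy : B * y + A = 0 := (mul_eq_zero.mp
    (by linear_combination hy - u 2 * hxyz : y * (B * y + A) = 0)).resolve_left hy0
  have hB : B = 0 := (mul_eq_zero.mp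
    (by linear_combination hBx - hBy : B * (x - y) = 0)).resolve_right (sub_ne_zero.mpr hxy)
  have hA : A = 0 := by linear_combination hBx - x * hB
  ext i
  fin_cases i
  · change u 0 = u 2 * (x * y + x * z + y * z)
    linear_combination hA
  · change u 1 = u 2 * -(x + y + z)
    linear_combination hB
  · exact (mul_one _).symm

lemma onLine_mk_iff {u v : Fin 3 → K} (hu : u ≠ 0) (hv : v ≠ 0) :
    OnLine (mk K u hu) (mk K v hv) ↔ u ⬝ᵥ v = 0 := by
  obtain ⟨a, ha⟩ := exists_smul_eq_mk_rep K u hu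
  obtain ⟨b, hb⟩ := exists_smul_eq_mk_rep K v hv
  rw [OnLine, ← ha, ← hb, smul_dotProduct, dotProduct_smul]
  simp only [smul_eq_zero_iff_eq]

def cubicLine (t : Kˣ) : ProjPlane K := mk K (lineVec (t : K)) (lineVec_ne_zero _)

def pointOfRoots (x y z : Kˣ) : ProjPlane K := mk K (pointVec x y z) (pointVec_ne_zero _ _ _)

lemma onLine_cubicLine_iff (Q : ProjPlane K) (t : Kˣ) :
    OnLine Q (cubicLine t) ↔ Q.rep ⬝ᵥ lineVec (t : K) = 0 := by
  conv_lhs => rw [← mk_rep Q]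
  exact onLine_mk_iff _ _

lemma cubicLine_injective : Function.Injective (cubicLine (K := K)) := by
  intro s t h
  obtain ⟨a, ha⟩ := (mk_eq_mk_iff' K _ _ _ _).mp h
  have h0 := congrFun ha 0
  have h1 := congrFun ha 1
  simp only [lineVec, Pi.smul_apply, smul_eq_mul, Matrix.cons_val_zero, Matrix.cons_val_one]
    at h0 h1
  have : (s : K) * (s - t) = 0 := by linear_combination (t : K) * h0 - h1
  exact Units.val_injective (sub_eq_zero.mp ((mul_eq_zero.mp this).resolve_left s.ne_zero))

lemma onLine_pointOfRoots_iff {x y z : Kˣ} (h : x * y * z = 1) (t : Kˣ) :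
    OnLine (pointOfRoots x y z) (cubicLine t) ↔ t = x ∨ t = y ∨ t = z := by
  have h' : (x : K) * y * z = 1 := by simpa using congrArg Units.val h
  rw [pointOfRoots, cubicLine, onLine_mk_iff, pointVec_dotProduct_lineVec h']
  simp [sub_eq_zero, Units.val_inj, or_assoc]

lemma eq_pointOfRoots_of_onLine {Q : ProjPlane K} {x y : Kˣ} (hxy : x ≠ y)
    (hx : OnLine Q (cubicLine x)) (hy : OnLine Q (cubicLine y)) :
    Q = pointOfRoots x y (x * y)⁻¹ := by
  rw [onLine_cubicLine_iff] at hx hy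
  have hQ := eq_smul_pointVec x.ne_zero y.ne_zero (Units.val_injective.ne hxy)
    (z := (((x * y)⁻¹ : Kˣ) : K))
    (by rw [← Units.val_mul, ← Units.val_mul, mul_inv_cancel, Units.val_one]) hx hy
  conv_lhs => rw [← mk_rep Q]
  exact (mk_eq_mk_iff' K _ _ _ _).mpr ⟨_, hQ.symm⟩

section Subgroup

variable (G : Subgroup Kˣ)

def cubicLines : Set (ProjPlane K) := Set.range fun g : G ↦ cubicLine (g : Kˣ)

lemma ncard_cubicLines : (cubicLines G).ncard = Nat.card G :=
  Set.ncard_range_of_injective (cubicLine_injective.comp Subtype.val_injective)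

variable [Fintype G]

open Classical in
noncomputable def rootFinset (Q : ProjPlane K) : Finset G := {g | OnLine Q (cubicLine g)}

variable {G}

@[simp]
lemma mem_rootFinset {Q : ProjPlane K} {g : G} :
    g ∈ rootFinset G Q ↔ OnLine Q (cubicLine g) := by
  simp [rootFinset]

lemma mult_cubicLines (Q : ProjPlane K) : mult (cubicLines G) Q = (rootFinset G Q).card := by
  have hset : {L ∈ cubicLines G | OnLine Q L} =
      (fun g : G ↦ cubicLine (g : Kˣ)) '' rootFinset G Q := by
    ext L
    constructor
    · rintro ⟨⟨g, rfl⟩, hg⟩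
      exact ⟨g, mem_rootFinset.mpr hg, rfl⟩
    · rintro ⟨g, hg, rfl⟩
      exact ⟨⟨g, rfl⟩, mem_rootFinset.mp hg⟩
  have hinj : Function.Injective fun g : G ↦ cubicLine (g : Kˣ) :=
    cubicLine_injective.comp Subtype.val_injective
  rw [mult, hset, Set.ncard_image_of_injective _ hinj, Set.ncard_coe_finset]

lemma eq_pointOfRoots_of_mem_rootFinset {Q : ProjPlane K} {a b : G} (hab : a ≠ b)
    (ha : a ∈ rootFinset G Q) (hb : b ∈ rootFinset G Q) :
    Q = pointOfRoots a b ((a * b)⁻¹ : G) := by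
  rw [mem_rootFinset] at ha hb
  simpa using eq_pointOfRoots_of_onLine (Subtype.val_injective.ne hab) ha hb

lemma eq_of_mem_rootFinset {Q Q' : ProjPlane K} {a b : G} (hab : a ≠ b)
    (ha : a ∈ rootFinset G Q) (hb : b ∈ rootFinset G Q)
    (ha' : a ∈ rootFinset G Q') (hb' : b ∈ rootFinset G Q') : Q = Q' := by
  rw [eq_pointOfRoots_of_mem_rootFinset hab ha hb, eq_pointOfRoots_of_mem_rootFinset hab ha' hb']

variable [DecidableEq G]

lemma rootFinset_pointOfRoots {a b c : G} (h : a * b * c = 1) :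
    rootFinset G (pointOfRoots a b c) = {a, b, c} := by
  have h' : (a : Kˣ) * b * c = 1 := by simpa using congrArg Subtype.val h
  ext g
  simp [onLine_pointOfRoots_iff h']

lemma rootFinset_eq_of_mem {Q : ProjPlane K} {a b : G} (hab : a ≠ b)
    (ha : a ∈ rootFinset G Q) (hb : b ∈ rootFinset G Q) :
    rootFinset G Q = {a, b, (a * b)⁻¹} := by
  obtain rfl := eq_pointOfRoots_of_mem_rootFinset hab ha hb
  exact rootFinset_pointOfRoots (mul_inv_cancel _)

lemma card_rootFinset_le_three (Q : ProjPlane K) : (rootFinset G Q).card ≤ 3 := by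
  by_contra! h
  obtain ⟨a, ha, b, hb, hab⟩ := Finset.one_lt_card.mp (by omega : 1 < (rootFinset G Q).card)
  rw [rootFinset_eq_of_mem hab ha hb] at h
  exact h.not_ge Finset.card_le_three

lemma mult_cubicLines_le_three (Q : ProjPlane K) : mult (cubicLines G) Q ≤ 3 :=
  (mult_cubicLines (G := G) Q).symm ▸ card_rootFinset_le_three Q

lemma prod_rootFinset_eq_one {Q : ProjPlane K} (hQ : #(rootFinset G Q) = 3) :
    ∏ g ∈ rootFinset G Q, g = 1 := by
  obtain ⟨a, b, c, hab, hac, hbc, hS⟩ := card_eq_three.mp hQ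
  have hc : c ∈ ({a, b, (a * b)⁻¹} : Finset G) := by
    rw [← rootFinset_eq_of_mem hab (by rw [hS]; simp) (by rw [hS]; simp), hS]
    simp
  simp only [mem_insert, mem_singleton, hac.symm, hbc.symm, false_or] at hc
  rw [hS, prod_insert (by simp [hab, hac]), prod_pair hbc, hc, ← mul_assoc, mul_inv_cancel]

lemma ncard_setOf_mult_eq_three :
    {Q | mult (cubicLines G) Q = 3}.ncard =
      #{S ∈ powersetCard 3 (univ : Finset G) | ∏ g ∈ S, g = 1} := by
  rw [← Set.ncard_coe_finset]
  refine Set.ncard_congr (fun Q _ ↦ rootFinset G Q) (fun Q hQ ↦ ?_) (fun Q Q' hQ _ hQQ' ↦ ?_)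
    fun S hS ↦ ?_
  · rw [Set.mem_ofPred_eq, mult_cubicLines] at hQ
    simp [hQ, prod_rootFinset_eq_one hQ]
  · rw [Set.mem_ofPred_eq, mult_cubicLines] at hQ
    obtain ⟨a, ha, b, hb, hab⟩ := one_lt_card.mp (by omega : 1 < #(rootFinset G Q))
    exact eq_of_mem_rootFinset hab ha hb (hQQ' ▸ ha) (hQQ' ▸ hb)
  · simp only [coe_filter, mem_powersetCard, subset_univ, true_and, Set.mem_ofPred_eq] at hS
    obtain ⟨a, b, c, hab, hac, hbc, rfl⟩ := card_eq_three.mp hS.1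
    have habc : a * b * c = 1 := by simpa [hab, hac, hbc, mul_assoc] using hS.2
    refine ⟨pointOfRoots a b c, ?_, rootFinset_pointOfRoots habc⟩
    rw [Set.mem_ofPred_eq, mult_cubicLines, rootFinset_pointOfRoots habc, hS.1]

def doublePoint (g : G) : ProjPlane K := pointOfRoots g g ((g * g)⁻¹ : G)

lemma rootFinset_doublePoint (g : G) : rootFinset G (doublePoint g) = {g, (g * g)⁻¹} := by
  rw [doublePoint, rootFinset_pointOfRoots (mul_inv_cancel _), insert_idem]

lemma mult_doublePoint {g : G} (hg : g ^ 3 ≠ 1) : mult (cubicLines G) (doublePoint g) = 2 := by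
  rw [mult_cubicLines, rootFinset_doublePoint]
  exact card_pair (mt self_eq_inv_mul_self_iff.mp hg)

lemma injOn_doublePoint : Set.InjOn (doublePoint (G := G)) {g | g ^ 3 ≠ 1} := by
  intro g hg g' _ hgg'
  have hS := congrArg (rootFinset G) hgg'
  rw [rootFinset_doublePoint, rootFinset_doublePoint] at hS
  by_contra hne
  have h1 : g ∈ ({g', (g' * g')⁻¹} : Finset G) := hS ▸ mem_insert_self _ _
  have h2 : g' ∈ ({g, (g * g)⁻¹} : Finset G) := hS ▸ mem_insert_self _ _
  simp only [mem_insert, mem_singleton, hne, Ne.symm hne, false_or] at h1 h2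
  rw [h2, mul_inv, inv_inv] at h1
  refine hg ?_
  calc g ^ 3 = g⁻¹ * (g * g * (g * g)) := by rw [pow_three]; group
    _ = 1 := by rw [← h1, inv_mul_cancel]

lemma exists_doublePoint_eq_of_mem_rootFinset {Q : ProjPlane K} {a b : G} (hab : a ≠ b)
    (ha : a ∈ rootFinset G Q) (hb : b ∈ rootFinset G Q) (hba : b = (a * a)⁻¹) :
    ∃ g : G, g ^ 3 ≠ 1 ∧ doublePoint g = Q := by
  refine ⟨a, fun h ↦ hab ?_, eq_of_mem_rootFinset hab ?_ ?_ ha hb⟩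
  · rw [hba]
    exact self_eq_inv_mul_self_iff.mpr h
  all_goals rw [rootFinset_doublePoint]; simp [hba]

lemma exists_doublePoint_eq {Q : ProjPlane K} (hQ : mult (cubicLines G) Q = 2) :
    ∃ g : G, g ^ 3 ≠ 1 ∧ doublePoint g = Q := by
  rw [mult_cubicLines] at hQ
  obtain ⟨a, b, hab, hS⟩ := card_eq_two.mp hQ
  have ha : a ∈ rootFinset G Q := by rw [hS]; simp
  have hb : b ∈ rootFinset G Q := by rw [hS]; simp
  have hc : (a * b)⁻¹ ∈ ({a, b} : Finset G) := by
    rw [← hS, rootFinset_eq_of_mem hab ha hb]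
    simp
  rw [mem_insert, mem_singleton] at hc
  rcases hc with hc | hc
  · refine exists_doublePoint_eq_of_mem_rootFinset hab ha hb ?_
    rw [eq_inv_iff_mul_eq_one, ← inv_eq_iff_mul_eq_one.mp hc, mul_comm b, mul_right_comm]
  · refine exists_doublePoint_eq_of_mem_rootFinset hab.symm hb ha ?_
    rw [eq_inv_iff_mul_eq_one, ← mul_assoc]
    exact inv_eq_iff_mul_eq_one.mp hc

lemma ncard_setOf_mult_eq_two (h : (Nat.card G).Coprime 3) :
    {Q | mult (cubicLines G) Q = 2}.ncard = Nat.card G - 1 := by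
  have himage : {Q | mult (cubicLines G) Q = 2} = doublePoint '' {g : G | g ^ 3 ≠ 1} := by
    ext Q
    refine ⟨exists_doublePoint_eq, ?_⟩
    rintro ⟨g, hg, rfl⟩
    exact mult_doublePoint hg
  have hcube : {g : G | g ^ 3 ≠ 1} = {1}ᶜ := by
    ext g
    exact (pow_three_eq_one_iff_of_coprime h).not
  rw [himage, injOn_doublePoint.ncard_image, hcube, Set.ncard_compl,
    Set.ncard_singleton]

end Subgroup

end CubicLines

/-- For every prime `p ≥ 5` there is a configuration of `p²` pairwise distinct lines in
`ℙ²(ℂ)` with exactly `(p²-1)(p²-2)/6` triple points, exactly `p²-1` double points and no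
point of multiplicity greater than `3`. -/
theorem many_triple_points (p : ℕ) (hp : p.Prime) (hp5 : 5 ≤ p) :
    ∃ lines : Set (ProjPlane ℂ),
      lines.ncard = p ^ 2 ∧
      {P : ProjPlane ℂ | mult lines P = 3}.ncard = (p ^ 2 - 1) * (p ^ 2 - 2) / 6 ∧
      {P : ProjPlane ℂ | mult lines P = 2}.ncard = p ^ 2 - 1 ∧
      ∀ P : ProjPlane ℂ, mult lines P ≤ 3 := by
  classical
  have : NeZero (p ^ 2) := ⟨pow_ne_zero 2 hp.ne_zero⟩
  let _ : Fintype (rootsOfUnity (p ^ 2) ℂ) := Fintype.ofFinite _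
  have hcard : Nat.card (rootsOfUnity (p ^ 2) ℂ) = p ^ 2 := Complex.card_rootsOfUnity _
  have hcop : (Nat.card (rootsOfUnity (p ^ 2) ℂ)).Coprime 3 := by
    rw [hcard]
    exact Nat.Coprime.pow_left 2 ((Nat.coprime_primes hp Nat.prime_three).mpr (by omega))
  refine ⟨CubicLines.cubicLines (rootsOfUnity (p ^ 2) ℂ), ?_, ?_, ?_,
    CubicLines.mult_cubicLines_le_three⟩
  · rw [CubicLines.ncard_cubicLines, hcard]
  · rw [CubicLines.ncard_setOf_mult_eq_three,
      card_powersetCard_three_filter_prod_eq_one hcop, hcard]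
  · rw [CubicLines.ncard_setOf_mult_eq_two hcop, hcard]
end

section
/- Let F be a field and let a, b, c, d ∈ F be nonzero elements such that the determinant of the matrix with rows (1,1,1), (a,b,1), (c,d,1) is nonzero. If a − b − c + d = 0, −ad + a − c + d = 0, a − bc = 0, bc − d = 0, and −ab + a + bc − 1 = 0, then F has characteristic 2, a² + a + 1 = 0, and b = a², c = a², d = a. -/
/-- If nonzero elements `a, b, c, d` of a field `F` satisfy the star-configuration condition
`det [[1,1,1],[a,b,1],[c,d,1]] ≠ 0` together with the collinearity equations
`a - b - c + d = 0`, `-ad + a - c + d = 0`, `a - bc = 0`, `bc - d = 0` and the pencil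
condition `-ab + a + bc - 1 = 0`, then `F` has characteristic `2`, `a² + a + 1 = 0`,
`b = a²`, `c = a²` and `d = a`. -/
theorem system_solution_char_two (F : Type*) [Field F] (a b c d : F)
    (ha : a ≠ 0) (hb : b ≠ 0) (hc : c ≠ 0) (hd : d ≠ 0)
    (hdet : Matrix.det !![1, 1, 1; a, b, 1; c, d, 1] ≠ 0)
    (e1 : a - b - c + d = 0)
    (e2 : -(a * d) + a - c + d = 0)
    (e3 : a - b * c = 0)
    (e4 : b * c - d = 0)
    (e5 : -(a * b) + a + b * c - 1 = 0) :
    ringChar F = 2 ∧ a ^ 2 + a + 1 = 0 ∧ b = a ^ 2 ∧ c = a ^ 2 ∧ d = a := by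
  simp [Matrix.det_fin_three, Matrix.vecHead, Matrix.vecTail] at hdet
  have hda : d = a := by linear_combination -e3 - e4
  have hc2 : c = 2 * a - a ^ 2 := by linear_combination (a - 1) * e3 + (a - 1) * e4 - e2
  have hb2 : b = a ^ 2 := by linear_combination -e1 - hc2 + hda
  subst hda hc2 hb2
  have p1 : d ^ 3 - 2 * d + 1 = 0 := by linear_combination -e5 - e3
  have p2a : d * (d ^ 3 - 2 * d ^ 2 + 1) = 0 := by linear_combination e3
  have p2 : d ^ 3 - 2 * d ^ 2 + 1 = 0 := (mul_eq_zero.mp p2a).resolve_left hd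
  have hone : d - 1 ≠ 0 := by
    intro h
    have ha1 : d = 1 := by linear_combination h
    apply hdet
    rw [ha1]
    ring
  have key : 2 * d * (d - 1) = 0 := by linear_combination p1 - p2
  have h20 : (2 : F) = 0 := by
    rcases mul_eq_zero.mp key with h | h
    · rcases mul_eq_zero.mp h with h | h
      · exact h
      · exact absurd h hd
    · exact absurd h hone
  have hchar : ringChar F = 2 := by
    apply CharP.ringChar_of_prime_eq_zero Nat.prime_two
    rw [Nat.cast_ofNat]
    exact h20
  have hsq : d ^ 2 + d + 1 = 0 := by
    have h : (d - 1) * (d ^ 2 + d + 1) = 0 := by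
      linear_combination p1 + (d - 1) * h20
    exact (mul_eq_zero.mp h).resolve_left hone
  exact ⟨hchar, hsq, rfl, by linear_combination (d - d ^ 2) * h20, rfl⟩
end

section
/- Let F be a field and let a, b, c ∈ F be pairwise distinct nonzero elements. If ab + ac + a − bc = 0, ac + a − b + c = 0, ab + c = 0, and a + bc = 0, then F has characteristic 5 and a = 3, b = 1, c = 2. -/
/-- If pairwise distinct nonzero elements `a, b, c` of a field `F` satisfy
`ab + ac + a - bc = 0`, `ac + a - b + c = 0`, `ab + c = 0` and `a + bc = 0`, then `F` has
characteristic `5` and `a = 3`, `b = 1`, `c = 2`. -/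
theorem system_solution_char_five (F : Type*) [Field F] (a b c : F)
    (ha : a ≠ 0) (hb : b ≠ 0) (hc : c ≠ 0)
    (hab : a ≠ b) (hac : a ≠ c) (hbc : b ≠ c)
    (e1 : a * b + a * c + a - b * c = 0)
    (e2 : a * c + a - b + c = 0)
    (e3 : a * b + c = 0)
    (e4 : a + b * c = 0) :
    ringChar F = 5 ∧ a = 3 ∧ b = 1 ∧ c = 2 := by
  have hb1 : b = 1 := by
    have key : c * ((b - 1) * (b + 1)) = 0 := by linear_combination b * e4 - e3
    rcases mul_eq_zero.1 key with h | h
    · exact absurd h hc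
    rcases mul_eq_zero.1 h with h | h
    · exact sub_eq_zero.mp h
    · exact absurd (by linear_combination e4 - c * h) hac
  subst hb1
  have hca : c = -a := by linear_combination e4
  subst hca
  have h3a : 3 * a + 1 = 0 := by linear_combination e1 - e2
  have h10 : (10 : F) = 0 := by linear_combination -9 * e2 - (3 * a - 1) * h3a
  have h2 : (2 : F) ≠ 0 := by
    intro h
    exact hab (by linear_combination h3a - (a + 1) * h)
  have h5 : (5 : F) = 0 := by
    have h25 : (2 : F) * 5 = 0 := by linear_combination h10
    exact (mul_eq_zero.1 h25).resolve_left h2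
  have h3 : (3 : F) ≠ 0 := by
    intro h
    exact h2 (by linear_combination h5 - h)
  have ea : a = 3 := by
    have : (3 : F) * (a - 3) = 0 := by linear_combination h3a - 2 * h5
    have := (mul_eq_zero.1 this).resolve_left h3
    exact sub_eq_zero.mp this
  have hdvd : ringChar F ∣ 5 := ringChar.dvd (by exact_mod_cast h5)
  have := (Nat.prime_five.eq_one_or_self_of_dvd _ hdvd).resolve_left
    (CharP.ringChar_ne_one)
  exact ⟨this, ea, rfl, by linear_combination -ea - h5⟩
end
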